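/- Let g ∈ Γ be an infinite order element and r > 0. Then there exists a constant C(g,r), depending only on g, r and δ, such that for all ξ, η ∈ ∂Γ∖V_r(g⁻) and all n ∈ ℕ, one has (gⁿξ | gⁿη) ≥ |g⁻ⁿ| + (ξ|η) − C(g,r). -/

import Mathlib

open Filter Topology MeasureTheory
open scoped ENNReal

namespace HarmonicBoundary

variable {Γ : Type} [Group Γ]

/-- Word length of `g` with respect to a generating set `S`. -/
noncomputable def wl (S : Set Γ) (g : Γ) : ℕ :=
  sInf {n : ℕ | ∃ w : List Γ, w.length = n ∧ (∀ x ∈ w, x ∈ S) ∧ w.prod = g}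

/-- Word metric `d(x,y) = |x⁻¹y|`. -/
noncomputable def wdist (S : Set Γ) (x y : Γ) : ℕ := wl S (x⁻¹ * y)

/-- Gromov product `(x|y)_z = (d(x,z)+d(y,z)-d(x,y))/2`. -/
noncomputable def gp (S : Set Γ) (z x y : Γ) : ℝ :=
  ((wdist S x z : ℝ) + (wdist S y z : ℝ) - (wdist S x y : ℝ)) / 2

/-- `S` is a finite symmetric generating set of `Γ`. -/
def IsGenSet (S : Set Γ) : Prop :=
  S.Finite ∧ (∀ s ∈ S, s⁻¹ ∈ S) ∧ Subgroup.closure S = ⊤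

/-- `Γ` is `δ`-hyperbolic with respect to the word metric of `S`:
`(x|y) ≥ min ((x|z), (y|z)) - δ` for all `x y z`. -/
def IsHyperbolic (S : Set Γ) (δ : ℝ) : Prop :=
  0 ≤ δ ∧ ∀ x y z : Γ, min (gp S 1 x z) (gp S 1 y z) - δ ≤ gp S 1 x y

/-- `Γ` is nonelementary: it has no cyclic subgroup of finite index. -/
def Nonelementary (Γ : Type) [Group Γ] : Prop :=
  ∀ g : Γ, (Subgroup.zpowers g).index = 0

/-- A sequence converges to infinity if `(x_i|x_j) → ∞`. -/
def ConvInf (S : Set Γ) (u : ℕ → Γ) : Prop :=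
  Tendsto (fun p : ℕ × ℕ => gp S 1 (u p.1) (u p.2)) atTop atTop

/-- Two sequences converging to infinity are equivalent if `(x_i|y_j) → ∞`. -/
def EquivSeq (S : Set Γ) (u v : ℕ → Γ) : Prop :=
  Tendsto (fun p : ℕ × ℕ => gp S 1 (u p.1) (v p.2)) atTop atTop

/-- An (abstract model of the) Gromov boundary of `Γ`: the points are exactly the
classes of sequences converging to infinity, modulo the equivalence `EquivSeq`,
together with the natural left action of `Γ`. -/
structure Boundary (Γ : Type) [Group Γ] (S : Set Γ) where
  pt : Type
  cls : (ℕ → Γ) → pt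
  cls_surj : ∀ ξ : pt, ∃ u : ℕ → Γ, ConvInf S u ∧ cls u = ξ
  cls_eq : ∀ u v : ℕ → Γ, ConvInf S u → ConvInf S v → (cls u = cls v ↔ EquivSeq S u v)
  smul : Γ → pt → pt
  smul_cls : ∀ (g : Γ) (u : ℕ → Γ), ConvInf S u → smul g (cls u) = cls fun n => g * u n

/-- Extension of the Gromov product to the boundary:
`(ξ|η) = sup liminf (x_i|y_j)` over sequences representing `ξ` and `η`,
as an extended nonnegative real. -/
noncomputable def bgp {S : Set Γ} (B : Boundary Γ S) (ξ η : B.pt) : ℝ≥0∞ :=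
  ⨆ (u : {u : ℕ → Γ // ConvInf S u ∧ B.cls u = ξ})
    (v : {v : ℕ → Γ // ConvInf S v ∧ B.cls v = η}),
    Filter.liminf (fun p : ℕ × ℕ => ENNReal.ofReal (gp S 1 (u.1 p.1) (v.1 p.2))) atTop

/-- Real-valued Gromov product on the boundary (finite for `ξ ≠ η`). -/
noncomputable def bgpR {S : Set Γ} (B : Boundary Γ S) (ξ η : B.pt) : ℝ := (bgp B ξ η).toReal

/-- The canonical topology of the Gromov boundary: a set is open iff around each of
its points it contains a basic neighbourhood `V_r(p) = {q | (q|p) > r}`. -/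
def btop {S : Set Γ} (B : Boundary Γ S) : TopologicalSpace B.pt where
  IsOpen O := ∀ p ∈ O, ∃ r : ℝ≥0∞, r ≠ ⊤ ∧ {q | r < bgp B q p} ⊆ O
  isOpen_univ := fun p _ => ⟨0, ENNReal.zero_ne_top, fun q _ => trivial⟩
  isOpen_inter := by
    intro A A' hA hA' p hp
    obtain ⟨r1, hr1, h1⟩ := hA p hp.1
    obtain ⟨r2, hr2, h2⟩ := hA' p hp.2
    refine ⟨max r1 r2, (max_lt hr1.lt_top hr2.lt_top).ne, fun q hq => ?_⟩
    have hq' : max r1 r2 < bgp B q p := hq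
    exact ⟨h1 (show r1 < bgp B q p from (le_max_left r1 r2).trans_lt hq'),
      h2 (show r2 < bgp B q p from (le_max_right r1 r2).trans_lt hq')⟩
  isOpen_sUnion := by
    intro s hs p hp
    obtain ⟨t, ht, hpt⟩ := hp
    obtain ⟨r, hr, hsub⟩ := hs t ht p hpt
    exact ⟨r, hr, fun q hq => ⟨t, ht, hsub hq⟩⟩

/-- The attracting fixed point `g⁺ = lim_n gⁿ` of an (infinite order) element. -/
def plusPt {S : Set Γ} (B : Boundary Γ S) (g : Γ) : B.pt := B.cls fun n => g ^ n

/-- The repelling fixed point `g⁻ = lim_n g⁻ⁿ` of an (infinite order) element. -/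
def minusPt {S : Set Γ} (B : Boundary Γ S) (g : Γ) : B.pt := B.cls fun n => g⁻¹ ^ n

/-- A geodesic ray starting at the identity. -/
def IsGeodesicRay (S : Set Γ) (x : ℕ → Γ) : Prop :=
  x 0 = 1 ∧ ∀ m n : ℕ, wdist S (x m) (x n) = Nat.dist m n

/-- A geodesic ray from `e` to the boundary point `ξ`, i.e. an element of `[e,ξ]`. -/
def RayTo {S : Set Γ} (B : Boundary Γ S) (x : ℕ → Γ) (ξ : B.pt) : Prop :=
  IsGeodesicRay S x ∧ ConvInf S x ∧ B.cls x = ξ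

/-- A geodesic segment from `x` to `y` (parametrized on `0,…,d(x,y)`),
i.e. an element of `[x,y]`. -/
def IsGeodesicSeg (S : Set Γ) (x y : Γ) (α : ℕ → Γ) : Prop :=
  α 0 = x ∧ α (wdist S x y) = y ∧
  ∀ m n : ℕ, m ≤ wdist S x y → n ≤ wdist S x y → wdist S (α m) (α n) = Nat.dist m n

/-- The boundary "cylinder" `U(ξ,R)`: all `η` such that for every pair of geodesic
rays `x ∈ [e,ξ]`, `y ∈ [e,η]` one has `lim_n (x(n)|y(n)) > R` (the sequence
`(x(n)|y(n))` is nondecreasing, so the limit exceeds `R` iff some term does). -/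
def Uset {S : Set Γ} (B : Boundary Γ S) (ξ : B.pt) (R : ℝ) : Set B.pt :=
  {η | ∀ x y : ℕ → Γ, RayTo B x ξ → RayTo B y η → ∃ n : ℕ, R < gp S 1 (x n) (y n)}

/-- `C_r(p) = {g | (g|e)_p > r}`. -/
def Cset (S : Set Γ) (p : Γ) (r : ℝ) : Set Γ := {g | r < gp S p g 1}

/-- The `R`-neighbourhood `N(α,R)` of a geodesic segment `α ∈ [x,y]`. -/
def segN (S : Set Γ) (x y : Γ) (α : ℕ → Γ) (R : ℝ) : Set Γ :=
  {g | ∃ i ≤ wdist S x y, (wdist S g (α i) : ℝ) ≤ R}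

/-- The `R`-neighbourhood `N(A,R)` of a subset `A ⊆ Γ`. -/
def setN (S : Set Γ) (A : Set Γ) (R : ℝ) : Set Γ :=
  {g | ∃ a ∈ A, (wdist S g a : ℝ) ≤ R}

/-- `μ` is a nondegenerate probability measure on `Γ` with support contained in `S`:
nonnegative, of total mass one, supported in `S`, and the semigroup generated by its
support is the whole of `Γ`. -/
structure IsRWMeasure (S : Set Γ) (μ : Γ → ℝ) : Prop where
  nonneg : ∀ g, 0 ≤ μ g
  support_subset : ∀ g, μ g ≠ 0 → g ∈ S
  total : ∑' g : Γ, μ g = 1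
  nondeg : ∀ g : Γ, ∃ l : List Γ, l ≠ [] ∧ (∀ x ∈ l, 0 < μ x) ∧ l.prod = g

open Classical in
/-- `n`-step transition probabilities `p⁽ⁿ⁾(x,y) = μ*ⁿ(x⁻¹y)` of the random walk. -/
noncomputable def ptrans (μ : Γ → ℝ) : ℕ → Γ → Γ → ℝ
  | 0 => fun x y => if x = y then 1 else 0
  | n + 1 => fun x y => ∑' z : Γ, ptrans μ n x z * μ (z⁻¹ * y)

/-- Green function `G(x,y) = Σ_n p⁽ⁿ⁾(x,y)`. -/
noncomputable def green (μ : Γ → ℝ) (x y : Γ) : ℝ := ∑' n : ℕ, ptrans μ n x y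

/-- `F(x,y) = G(x,y)/G(y,y)`, the probability that the walk from `x` ever hits `y`. -/
noncomputable def greenF (μ : Γ → ℝ) (x y : Γ) : ℝ := green μ x y / green μ y y

/-- The Martin kernel `K(x,y) = G(x,y)/G(e,y)`. -/
noncomputable def martinK (μ : Γ → ℝ) (x y : Γ) : ℝ := green μ x y / green μ 1 y

open Classical in
/-- Transition probabilities of the walk restricted to `Δ` (killed when leaving `Δ`). -/
noncomputable def ptransR (μ : Γ → ℝ) (Δ : Set Γ) : ℕ → Γ → Γ → ℝ
  | 0 => fun x y => if x = y ∧ x ∈ Δ then 1 else 0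
  | n + 1 => fun x y => if y ∈ Δ then ∑' z : Γ, ptransR μ Δ n x z * μ (z⁻¹ * y) else 0

/-- Green function `G_Δ` of the restricted walk. -/
noncomputable def greenR (μ : Γ → ℝ) (Δ : Set Γ) (x y : Γ) : ℝ := ∑' n : ℕ, ptransR μ Δ n x y

/-- `F_Δ(x,y) = G_Δ(x,y)/G_Δ(y,y)`. -/
noncomputable def greenFR (μ : Γ → ℝ) (Δ : Set Γ) (x y : Γ) : ℝ :=
  greenR μ Δ x y / greenR μ Δ y y

/-- Generating function `G_Δ(x,y|z) = Σ_n p_Δ⁽ⁿ⁾(x,y) zⁿ`. -/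
noncomputable def greenRZ (μ : Γ → ℝ) (Δ : Set Γ) (x y : Γ) (z : ℝ) : ℝ :=
  ∑' n : ℕ, ptransR μ Δ n x y * z ^ n

/-- Spectral radius `ρ(P) = lim_n p⁽ⁿ⁾(e,e)^{1/n}` of the walk. -/
noncomputable def specRad (μ : Γ → ℝ) : ℝ :=
  Filter.limsup (fun n : ℕ => (ptrans μ n 1 1) ^ ((n : ℝ)⁻¹)) atTop

/-- `u` is harmonic on `Λ`: `Σ_h p(g,h) u(h) = u(g)` for `g ∈ Λ`, `p(g,h)=μ(g⁻¹h)`. -/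
def HarmonicOn (μ : Γ → ℝ) (u : Γ → ℝ) (Λ : Set Γ) : Prop :=
  ∀ g ∈ Λ, (∑' h : Γ, μ (g⁻¹ * h) * u h) = u g

/-- `u` vanishes at infinity on `Λ`: `u(g_n) → 0` along sequences in `Λ` with `|g_n|→∞`. -/
def VanishesAtInftyOn (S : Set Γ) (u : Γ → ℝ) (Λ : Set Γ) : Prop :=
  ∀ ε : ℝ, 0 < ε → ∃ M : ℕ, ∀ g ∈ Λ, M ≤ wl S g → |u g| ≤ ε

open Classical in
/-- `r(g) = K(g⁻¹,g⁺)` for infinite order `g`, and `r(g) = 1` for finite order `g`;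
here `Kb` is the boundary extension of the Martin kernel. -/
noncomputable def rfun {S : Set Γ} (B : Boundary Γ S) (Kb : Γ → B.pt → ℝ) (g : Γ) : ℝ :=
  if IsOfFinOrder g then 1 else Kb g⁻¹ (plusPt B g)

/-- The ratio set `r(Γ,∂Γ,ν)`: all `l ≥ 0` such that for every `ε > 0` and every
Borel `A` of positive measure there is `g ∈ Γ` such that
`{ω ∈ gA ∩ A : |d(gν)/dν(ω) − l| < ε}` has positive measure; here the
Radon–Nikodym derivative `d(gν)/dν` is the Martin kernel `Kb g`. -/
def ratioSet {S : Set Γ} (B : Boundary Γ S) [MeasurableSpace B.pt]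
    (ν : Measure B.pt) (Kb : Γ → B.pt → ℝ) : Set ℝ :=
  {l : ℝ | 0 ≤ l ∧ ∀ ε : ℝ, 0 < ε → ∀ A : Set B.pt, MeasurableSet A → 0 < ν A →
    ∃ g : Γ, 0 < ν {ω | ω ∈ A ∧ B.smul g⁻¹ ω ∈ A ∧ |Kb g ω - l| < ε}}

/-- A left invariant finitely additive mean on `Γ`; `Γ` is amenable iff one exists. -/
structure InvariantMean (Γ : Type) [Group Γ] where
  m : Set Γ → ℝ
  nonneg : ∀ A, 0 ≤ m A
  total : m Set.univ = 1
  fin_add : ∀ A B : Set Γ, Disjoint A B → m (A ∪ B) = m A + m B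
  invariant : ∀ (g : Γ) (A : Set Γ), m ((g * ·) ⁻¹' A) = m A


section Infra

variable {S : Set Γ}

lemma exists_word (hS : IsGenSet S) (g : Γ) :
    ∃ w : List Γ, (∀ x ∈ w, x ∈ S) ∧ w.prod = g := by
  have hg : g ∈ Subgroup.closure S := by rw [hS.2.2]; trivial
  induction hg using Subgroup.closure_induction with
  | mem x hx => exact ⟨[x], by simpa using hx, by simp⟩
  | one => exact ⟨[], by simp, by simp⟩
  | mul x y _ _ hx hy =>
      obtain ⟨w1, h1, p1⟩ := hx
      obtain ⟨w2, h2, p2⟩ := hy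
      refine ⟨w1 ++ w2, ?_, by simp [p1, p2]⟩
      intro z hz
      rcases List.mem_append.1 hz with h | h
      exacts [h1 z h, h2 z h]
  | inv x _ hx =>
      obtain ⟨w, h1, p1⟩ := hx
      refine ⟨(w.map fun y => y⁻¹).reverse, ?_, ?_⟩
      · intro z hz
        simp only [List.mem_reverse, List.mem_map] at hz
        obtain ⟨y, hy, rfl⟩ := hz
        exact hS.2.1 y (h1 y hy)
      · rw [← List.prod_inv_reverse, p1]

lemma wordSet_nonempty (hS : IsGenSet S) (g : Γ) :
    {n : ℕ | ∃ w : List Γ, w.length = n ∧ (∀ x ∈ w, x ∈ S) ∧ w.prod = g}.Nonempty := by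
  obtain ⟨w, h1, h2⟩ := exists_word hS g
  exact ⟨w.length, w, rfl, h1, h2⟩

lemma wl_spec (hS : IsGenSet S) (g : Γ) :
    ∃ w : List Γ, w.length = wl S g ∧ (∀ x ∈ w, x ∈ S) ∧ w.prod = g :=
  Nat.sInf_mem (wordSet_nonempty hS g)

lemma wl_le_word (w : List Γ) (hw : ∀ x ∈ w, x ∈ S) (hp : w.prod = g) :
    wl S g ≤ w.length :=
  Nat.sInf_le ⟨w, rfl, hw, hp⟩

lemma wl_one : wl S (1 : Γ) = 0 :=
  Nat.le_zero.1 (wl_le_word [] (by simp) (by simp))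

lemma wl_mul_le (g h : Γ) (hS : IsGenSet S) : wl S (g * h) ≤ wl S g + wl S h := by
  obtain ⟨w1, l1, h1, p1⟩ := wl_spec hS g
  obtain ⟨w2, l2, h2, p2⟩ := wl_spec hS h
  calc wl S (g * h) ≤ (w1 ++ w2).length := by
        refine wl_le_word _ ?_ (by simp [p1, p2])
        intro z hz; rcases List.mem_append.1 hz with hh | hh
        exacts [h1 z hh, h2 z hh]
    _ = wl S g + wl S h := by simp [l1, l2]

lemma wl_inv_le (hS : IsGenSet S) (g : Γ) : wl S g⁻¹ ≤ wl S g := by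
  obtain ⟨w, l, h1, p1⟩ := wl_spec hS g
  have : wl S g⁻¹ ≤ ((w.map fun y => y⁻¹).reverse).length := by
    refine wl_le_word _ ?_ ?_
    · intro z hz
      simp only [List.mem_reverse, List.mem_map] at hz
      obtain ⟨y, hy, rfl⟩ := hz
      exact hS.2.1 y (h1 y hy)
    · rw [← List.prod_inv_reverse, p1]
  simpa [l] using this

lemma wl_inv (hS : IsGenSet S) (g : Γ) : wl S g⁻¹ = wl S g :=
  le_antisymm (wl_inv_le hS g) (by simpa using wl_inv_le hS g⁻¹)

lemma wl_eq_zero (hS : IsGenSet S) {g : Γ} (h : wl S g = 0) : g = 1 := by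
  obtain ⟨w, l, _, p⟩ := wl_spec hS g
  rw [h, List.length_eq_zero_iff] at l
  · rw [← p, l]; simp

end Infra
section Metric

variable {S : Set Γ}

/-- real-valued word distance -/
noncomputable def dd (S : Set Γ) (x y : Γ) : ℝ := (wdist S x y : ℝ)

lemma dd_def (x y : Γ) : dd S x y = (wl S (x⁻¹ * y) : ℝ) := rfl

lemma gp_eq (z x y : Γ) : gp S z x y = (dd S x z + dd S y z - dd S x y) / 2 := rfl

lemma dd_nonneg (x y : Γ) : 0 ≤ dd S x y := Nat.cast_nonneg _

lemma dd_self (x : Γ) : dd S x x = 0 := by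
  rw [dd_def, inv_mul_cancel, wl_one]; simp

lemma dd_comm (hS : IsGenSet S) (x y : Γ) : dd S x y = dd S y x := by
  have h : (x⁻¹ * y)⁻¹ = y⁻¹ * x := by group
  rw [dd_def, dd_def, ← h, wl_inv hS]

lemma dd_triangle (hS : IsGenSet S) (x y z : Γ) : dd S x z ≤ dd S x y + dd S y z := by
  have h : x⁻¹ * z = (x⁻¹ * y) * (y⁻¹ * z) := by group
  rw [dd_def, dd_def, dd_def, h]
  exact_mod_cast wl_mul_le _ _ hS

lemma dd_left (a x y : Γ) : dd S (a * x) (a * y) = dd S x y := by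
  have h : (a * x)⁻¹ * (a * y) = x⁻¹ * y := by group
  rw [dd_def, dd_def, h]

lemma dd_eq_wl (hS : IsGenSet S) (x : Γ) : dd S x 1 = (wl S x : ℝ) := by
  rw [dd_def, mul_one, wl_inv hS]

lemma dd_zero_iff (hS : IsGenSet S) {x y : Γ} : dd S x y = 0 ↔ x = y := by
  constructor
  · intro h
    rw [dd_def] at h
    have h2 : wl S (x⁻¹ * y) = 0 := by exact_mod_cast h
    have h3 := wl_eq_zero hS h2
    have h4 : y = x * 1 := by rw [← h3]; group
    simpa using h4.symm
  · rintro rfl; exact dd_self x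

lemma gp_nonneg (hS : IsGenSet S) (x y : Γ) : 0 ≤ gp S 1 x y := by
  have h := dd_triangle hS x 1 y
  have h2 := dd_comm hS (1:Γ) y
  rw [gp_eq]
  linarith

lemma gp_le_left (hS : IsGenSet S) (x y : Γ) : gp S 1 x y ≤ dd S x 1 := by
  have h := dd_triangle hS y x 1
  have h2 := dd_comm hS y x
  rw [gp_eq]
  linarith

lemma gp_comm (hS : IsGenSet S) (z x y : Γ) : gp S z x y = gp S z y x := by
  have h := dd_comm hS x y
  rw [gp_eq, gp_eq]
  linarith

lemma gp_le_right (hS : IsGenSet S) (x y : Γ) : gp S 1 x y ≤ dd S y 1 := by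
  rw [gp_comm hS]; exact gp_le_left hS y x

lemma gp_translate (a z x y : Γ) : gp S (a * z) (a * x) (a * y) = gp S z x y := by
  rw [gp_eq, gp_eq, dd_left, dd_left, dd_left]

lemma gp_base (w x y : Γ) :
    gp S w x y = gp S 1 x y + dd S w 1 - gp S 1 x w - gp S 1 y w := by
  simp only [gp_eq]
  ring

lemma gp_hyp {δ : ℝ} (hδ : IsHyperbolic S δ) (w x y z : Γ) :
    min (gp S w x z) (gp S w y z) - δ ≤ gp S w x y := by
  have key : ∀ p q : Γ, gp S w p q = gp S 1 (w⁻¹ * p) (w⁻¹ * q) := by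
    intro p q
    have h := gp_translate (S := S) w⁻¹ w p q
    rw [inv_mul_cancel] at h
    exact h.symm
  rw [key x y, key x z, key y z]
  exact hδ.2 _ _ _

lemma gp_perturb (hS : IsGenSet S) (x y x₀ y₀ : Γ) :
    gp S 1 x₀ y₀ - dd S x x₀ - dd S y y₀ ≤ gp S 1 x y := by
  have h1 : dd S x₀ 1 ≤ dd S x₀ x + dd S x 1 := dd_triangle hS _ _ _
  have h2 : dd S y₀ 1 ≤ dd S y₀ y + dd S y 1 := dd_triangle hS _ _ _
  have h3 : dd S x y ≤ dd S x x₀ + dd S x₀ y₀ + dd S y₀ y := by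
    have t1 := dd_triangle hS x x₀ y
    have t2 := dd_triangle hS x₀ y₀ y
    linarith
  have c1 := dd_comm hS x₀ x
  have c2 := dd_comm hS y₀ y
  simp only [gp_eq]
  linarith

end Metric
section Balls

variable {S : Set Γ}

lemma ball_finite (hS : IsGenSet S) (n : ℕ) : {g : Γ | wl S g ≤ n}.Finite := by
  induction n with
  | zero =>
      refine Set.Finite.subset (Set.finite_singleton (1 : Γ)) ?_
      intro g hg
      simp only [Set.mem_setOf_eq, Nat.le_zero] at hg
      simp [wl_eq_zero hS hg]
  | succ n ih =>
      refine Set.Finite.subset (ih.union ((ih.image2 (f := fun a b => a * b)) hS.1)) ?_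
      intro g hg
      simp only [Set.mem_setOf_eq] at hg
      obtain ⟨w, hlen, hw, hp⟩ := wl_spec hS g
      by_cases hl : w.length ≤ n
      · exact Or.inl (by simp only [Set.mem_setOf_eq]; omega)
      · have hne : w ≠ [] := by
          intro h; rw [h] at hl; simp at hl
        right
        refine Set.mem_image2.2 ⟨w.dropLast.prod, ?_, w.getLast hne, ?_, ?_⟩
        · have h1 : wl S w.dropLast.prod ≤ w.dropLast.length :=
            wl_le_word _ (fun x hx => hw x (List.mem_of_mem_dropLast hx)) rfl
          have h2 : w.dropLast.length = w.length - 1 := List.length_dropLast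
          simp only [Set.mem_setOf_eq]
          omega
        · exact hw _ (List.getLast_mem hne)
        · rw [← hp]
          conv_rhs => rw [← List.dropLast_append_getLast hne]
          rw [List.prod_append, List.prod_singleton]

lemma exists_prefix (hS : IsGenSet S) (g : Γ) (k : ℕ) (hk : k ≤ wl S g) :
    ∃ u : Γ, wl S u = k ∧ wl S (u⁻¹ * g) = wl S g - k := by
  obtain ⟨w, hlen, hw, hp⟩ := wl_spec hS g
  refine ⟨(w.take k).prod, ?_⟩
  have h1 : wl S (w.take k).prod ≤ k := by
    have := wl_le_word (S := S) (w.take k) (fun x hx => hw x (List.mem_of_mem_take hx)) rfl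
    rw [List.length_take] at this
    omega
  have hsplit : (w.take k).prod * (w.drop k).prod = g := by
    rw [← List.prod_append, List.take_append_drop, hp]
  have h2 : wl S ((w.take k).prod⁻¹ * g) ≤ wl S g - k := by
    have heq : (w.take k).prod⁻¹ * g = (w.drop k).prod := by
      rw [← hsplit]; group
    rw [heq]
    have := wl_le_word (S := S) (w.drop k) (fun x hx => hw x (List.mem_of_mem_drop hx)) rfl
    rw [List.length_drop] at this
    omega
  have h3 : wl S g ≤ wl S (w.take k).prod + wl S ((w.take k).prod⁻¹ * g) := by
    have := wl_mul_le (S := S) (w.take k).prod ((w.take k).prod⁻¹ * g) hS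
    simpa [mul_inv_cancel_left] using this
  omega

lemma exists_midpoint (hS : IsGenSet S) {δ : ℝ} (hδ : IsHyperbolic S δ) (p q : Γ) :
    ∃ m : Γ, ∀ z : Γ, dd S z m ≤ max (dd S z p) (dd S z q) - dd S p q / 2 + 2 * δ + 1 := by
  set L := wdist S p q with hLdef
  obtain ⟨u, hu1, hu2⟩ := exists_prefix hS (p⁻¹ * q) (L / 2) (Nat.div_le_self _ _)
  set m := p * u with hm
  have hpm : dd S p m = ((L / 2 : ℕ) : ℝ) := by
    rw [dd_def]
    have h : p⁻¹ * m = u := by rw [hm]; group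
    rw [h, hu1]
  have hmq : dd S m q = ((L - L / 2 : ℕ) : ℝ) := by
    rw [dd_def]
    have h : m⁻¹ * q = u⁻¹ * (p⁻¹ * q) := by rw [hm]; group
    rw [h, hu2]
    rfl
  have hpq : dd S p q = (L : ℝ) := rfl
  have c1 : 2 * ((L / 2 : ℕ) : ℝ) ≤ (L : ℝ) := by
    have : 2 * (L / 2) ≤ L := by omega
    exact_mod_cast this
  have c1' : (L : ℝ) ≤ 2 * ((L / 2 : ℕ) : ℝ) + 1 := by
    have : L ≤ 2 * (L / 2) + 1 := by omega
    exact_mod_cast this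
  have c2 : ((L - L / 2 : ℕ) : ℝ) = (L : ℝ) - ((L / 2 : ℕ) : ℝ) := by
    have := Nat.div_le_self L 2
    push_cast [Nat.cast_sub this]
    ring
  refine ⟨m, fun z => ?_⟩
  have h4 := gp_hyp hδ z p q m
  have hmin : min (gp S z p m) (gp S z q m) ≤ gp S z p q + δ := by linarith
  have e1 : gp S z p m = (dd S z p + dd S z m - dd S p m) / 2 := by
    rw [gp_eq, dd_comm hS p z, dd_comm hS m z]
  have e2 : gp S z q m = (dd S z q + dd S z m - dd S q m) / 2 := by
    rw [gp_eq, dd_comm hS q z, dd_comm hS m z]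
  have e3 : gp S z p q = (dd S z p + dd S z q - dd S p q) / 2 := by
    rw [gp_eq, dd_comm hS p z, dd_comm hS q z]
  have e4 : dd S q m = dd S m q := dd_comm hS q m
  have m1 : dd S z p ≤ max (dd S z p) (dd S z q) := le_max_left _ _
  have m2 : dd S z q ≤ max (dd S z p) (dd S z q) := le_max_right _ _
  rcases le_total (gp S z p m) (gp S z q m) with hc | hc
  · have hthis : gp S z p m ≤ gp S z p q + δ := by
      rw [min_eq_left hc] at hmin; exact hmin
    rw [e1, e3] at hthis
    rw [hpm] at hthis
    linarith [hpq, c1, c1', c2, hmq]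
  · have hthis : gp S z q m ≤ gp S z p q + δ := by
      rw [min_eq_right hc] at hmin; exact hmin
    rw [e2, e3] at hthis
    rw [e4, hmq] at hthis
    linarith [hpq, c1, c1', c2, hpm]

end Balls
section Endgame

variable {S : Set Γ} {δ : ℝ}

lemma exists_undistorted_power (hS : IsGenSet S) (hδ : IsHyperbolic S δ)
    {a : Γ} (ha : ¬ IsOfFinOrder a) (T : ℕ) :
    ∃ N : ℕ, 1 ≤ N ∧ ∀ x : Γ, (T : ℝ) < dd S x (a ^ N * x) := by
  classical
  by_contra hcon
  push_neg at hcon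
  -- radius bound for the pigeonhole ball
  set Cr : ℕ := 2 * T + Nat.ceil (4 * δ) + 2 with hCr
  set Bfin : Finset Γ := (ball_finite hS Cr).toFinset with hBfin
  set K : ℕ := Bfin.card + 1 with hK
  obtain ⟨x, hx⟩ := hcon K (by omega)
  -- the orbit segment
  set Y : Finset Γ := (Finset.range K).image (fun j => a ^ j * x) with hY
  have hYne : Y.Nonempty := by
    refine ⟨x, ?_⟩
    simp only [hY, Finset.mem_image]
    exact ⟨0, by simp [hK], by simp⟩
  -- displacement of a^K at any orbit point is ≤ T
  have hdisp : ∀ z : Γ, dd S (a ^ K * z * x) (a ^ K * (z * x)) = 0 := by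
    intro z; rw [mul_assoc]; exact dd_self _
  have hxK : ∀ j : ℕ, dd S (a ^ j * x) (a ^ (j + K) * x) ≤ (T : ℝ) := by
    intro j
    have : dd S (a ^ j * x) (a ^ (j + K) * x) = dd S x (a ^ K * x) := by
      have e : a ^ (j + K) * x = a ^ j * (a ^ K * x) := by
        rw [pow_add]; group
      rw [e, ← dd_left (S := S) (a ^ j)⁻¹ (a ^ j * x) (a ^ j * (a ^ K * x))]
      simp [← mul_assoc]
    rw [this]; exact hx
  -- the radius function and its minimiser
  set ρ : Γ → ℕ := fun q => Y.sup (fun y => wdist S q y) with hρ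
  have hρmem : ∀ q y, y ∈ Y → dd S q y ≤ ((ρ q : ℕ) : ℝ) := by
    intro q y hy
    exact_mod_cast Nat.cast_le.2 (Finset.le_sup (f := fun y => wdist S q y) hy)
  obtain ⟨n₀, ⟨q₀, hq₀⟩, hmin⟩ :
      ∃ n₀, (∃ q, ρ q = n₀) ∧ ∀ n, (∃ q, ρ q = n) → n₀ ≤ n := by
    have hne : (Set.range ρ).Nonempty := ⟨ρ 1, 1, rfl⟩
    refine ⟨sInf (Set.range ρ), ?_, ?_⟩
    · obtain ⟨q, hq⟩ := Nat.sInf_mem hne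
      exact ⟨q, hq⟩
    · intro n ⟨q, hq⟩
      exact Nat.sInf_le ⟨q, hq⟩
  -- key displacement bound for the minimiser
  have key : ∀ i : ℕ, 1 ≤ i → i ≤ K → dd S q₀ (a ^ i * q₀) ≤ 2 * T + 4 * δ + 2 := by
    intro i hi1 hiK
    set q' : Γ := a ^ i * q₀ with hq'
    -- radius of q' is at most n₀ + T
    have hrq' : ∀ y ∈ Y, dd S q' y ≤ (n₀ : ℝ) + T := by
      intro y hy
      simp only [hY, Finset.mem_image, Finset.mem_range] at hy
      obtain ⟨j, hj, rfl⟩ := hy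
      by_cases hji : i ≤ j
      · -- y = a^i * (a^(j-i) x)
        have e : a ^ j * x = a ^ i * (a ^ (j - i) * x) := by
          rw [← mul_assoc, ← pow_add]
          congr 2
          omega
        rw [e, hq', dd_left]
        have : a ^ (j - i) * x ∈ Y := by
          simp only [hY, Finset.mem_image, Finset.mem_range]
          exact ⟨j - i, by omega, rfl⟩
        have h1 := hρmem q₀ _ this
        rw [hq₀] at h1
        linarith [h1]
      · -- use the wrap-around point a^(j+K-i) x
        have hmem : a ^ (j + K - i) * x ∈ Y := by
          simp only [hY, Finset.mem_image, Finset.mem_range]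
          exact ⟨j + K - i, by omega, rfl⟩
        have tri : dd S q' (a ^ j * x) ≤
            dd S q' (a ^ (j + K) * x) + dd S (a ^ (j + K) * x) (a ^ j * x) :=
          dd_triangle hS _ _ _
        have e : a ^ (j + K) * x = a ^ i * (a ^ (j + K - i) * x) := by
          rw [← mul_assoc, ← pow_add]
          congr 2
          omega
        have h1 : dd S q' (a ^ (j + K) * x) ≤ (n₀ : ℝ) := by
          rw [e, hq', dd_left]
          have := hρmem q₀ _ hmem
          rw [hq₀] at this
          exact this
        have h2 : dd S (a ^ (j + K) * x) (a ^ j * x) ≤ (T : ℝ) := by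
          rw [dd_comm hS]
          exact hxK j
        linarith
    -- midpoint argument
    obtain ⟨m, hm⟩ := exists_midpoint hS hδ q₀ q'
    have hρm : (n₀ : ℝ) ≤ (ρ m : ℝ) := by
      exact_mod_cast hmin (ρ m) ⟨m, rfl⟩
    obtain ⟨ym, hym, hsup⟩ : ∃ y ∈ Y, ρ m = wdist S m y := by
      obtain ⟨y, hy, he⟩ := Finset.exists_mem_eq_sup Y hYne (fun y => wdist S m y)
      exact ⟨y, hy, he⟩
    have hmym : (ρ m : ℝ) = dd S m ym := by rw [hsup]; rfl
    have hzb := hm ym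
    have hy1 : dd S ym q₀ ≤ (n₀ : ℝ) := by
      rw [dd_comm hS]
      have := hρmem q₀ ym hym
      rw [hq₀] at this; exact this
    have hy2 : dd S ym q' ≤ (n₀ : ℝ) + T := by
      rw [dd_comm hS]; exact hrq' ym hym
    have hmax : max (dd S ym q₀) (dd S ym q') ≤ (n₀ : ℝ) + T := by
      exact max_le (by linarith) hy2
    have hcm : dd S ym m = dd S m ym := dd_comm hS _ _
    have : (n₀ : ℝ) ≤ (n₀ : ℝ) + T - dd S q₀ q' / 2 + 2 * δ + 1 := by
      calc (n₀ : ℝ) ≤ (ρ m : ℝ) := hρm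
        _ = dd S ym m := by rw [hmym, hcm]
        _ ≤ max (dd S ym q₀) (dd S ym q') - dd S q₀ q' / 2 + 2 * δ + 1 := hzb
        _ ≤ (n₀ : ℝ) + T - dd S q₀ q' / 2 + 2 * δ + 1 := by linarith
    linarith
  -- pigeonhole
  have hmaps : ∀ i ∈ Finset.Icc 1 K, q₀⁻¹ * a ^ i * q₀ ∈ Bfin := by
    intro i hi
    simp only [Finset.mem_Icc] at hi
    have h1 := key i hi.1 hi.2
    have h2 : dd S q₀ (a ^ i * q₀) = (wl S (q₀⁻¹ * a ^ i * q₀) : ℝ) := by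
      rw [dd_def, ← mul_assoc]
    rw [h2] at h1
    have h3 : (wl S (q₀⁻¹ * a ^ i * q₀) : ℝ) ≤ (Cr : ℝ) := by
      have : (2 : ℝ) * T + 4 * δ + 2 ≤ (Cr : ℝ) := by
        have hc : (4 : ℝ) * δ ≤ (Nat.ceil (4 * δ) : ℝ) := Nat.le_ceil _
        have : (Cr : ℝ) = 2 * T + (Nat.ceil (4*δ) : ℝ) + 2 := by
          rw [hCr]; push_cast; ring
        linarith
      linarith
    have h4 : wl S (q₀⁻¹ * a ^ i * q₀) ≤ Cr := by exact_mod_cast h3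
    simp only [hBfin, Set.Finite.mem_toFinset, Set.mem_setOf_eq]
    exact h4
  have hcard : Bfin.card < (Finset.Icc 1 K).card := by
    rw [Nat.card_Icc]
    omega
  obtain ⟨i, hi, i', hi', hne, heq⟩ :=
    Finset.exists_ne_map_eq_of_card_lt_of_maps_to hcard hmaps
  have : a ^ i = a ^ i' := by
    exact mul_left_cancel (mul_right_cancel heq)
  have hinj := injective_pow_iff_not_isOfFinOrder.2 ha
  exact hne (hinj this)

end Endgame
section Chain

variable {S : Set Γ} {δ : ℝ}

lemma gp_add (hS : IsGenSet S) (p x q : Γ) :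
    gp S p x q + gp S q x p = dd S p q := by
  rw [gp_eq, gp_eq, dd_comm hS q p]
  ring

lemma dd_pow_succ (hS : IsGenSet S) (h : Γ) (k : ℕ) :
    dd S (h ^ (k+1)) (h ^ k) = dd S h 1 := by
  rw [dd_def, dd_def]
  congr 1
  have e : (h ^ (k+1))⁻¹ * h ^ k = h⁻¹ := by
    rw [pow_succ]
    group
  rw [e, mul_one]

lemma dd_one_pow (hS : IsGenSet S) (h : Γ) (k : ℕ) :
    dd S 1 (h ^ (k+1)) = dd S 1 (h ^ k) + dd S h 1 - 2 * gp S (h ^ k) 1 (h ^ (k+1)) := by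
  have e := gp_eq (S := S) (h ^ k) 1 (h ^ (k+1))
  have c2 := dd_pow_succ hS h k
  linarith [e, c2]

lemma chain_main (hS : IsGenSet S) (hδ : IsHyperbolic S δ) {h : Γ}
    (hD : 2 * gp S 1 h h⁻¹ + 3 * δ < dd S h 1) :
    ∀ k m : ℕ, 1 ≤ k → k ≤ m →
      (k : ℝ) * (dd S h 1 - 2 * gp S 1 h h⁻¹ - 2 * δ) - (gp S 1 h h⁻¹ + 2 * δ)
        ≤ gp S 1 (h ^ k) (h ^ m) := by
  have hδ0 : 0 ≤ δ := hδ.1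
  set c : ℝ := gp S 1 h h⁻¹ with hc
  set D : ℝ := dd S h 1 with hDdef
  have hc0 : 0 ≤ c := gp_nonneg hS _ _
  set σ : ℝ := D - 2 * c - 2 * δ with hσ
  have hσpos : 0 < σ := by rw [hσ]; linarith
  -- the inner products B k
  have hBval : ∀ k : ℕ, gp S (h ^ (k+1)) (h ^ (k+2)) (h ^ k) = c := by
    intro k
    have e := gp_translate (S := S) (h ^ (k+1)) 1 h h⁻¹
    have e1 : h ^ (k+1) * 1 = h ^ (k+1) := mul_one _
    have e2 : h ^ (k+1) * h = h ^ (k+2) := by rw [← pow_succ]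
    have e3 : h ^ (k+1) * h⁻¹ = h ^ k := by rw [pow_succ]; group
    rw [e1, e2, e3] at e
    rw [e]
  have hBD : ∀ k : ℕ, gp S (h ^ (k+1)) 1 (h ^ k)
      = dd S (h ^ (k+1)) (h ^ k) - gp S (h ^ k) 1 (h ^ (k+1)) := by
    intro k
    have := gp_add hS (h ^ (k+1)) 1 (h ^ k)
    linarith
  have hB : ∀ k : ℕ, gp S (h ^ k) 1 (h ^ (k+1)) ≤ c + δ := by
    intro k
    induction k with
    | zero =>
        have e : gp S (h ^ 0) 1 (h ^ 1) = 0 := by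
          simp only [pow_zero, pow_one]
          rw [gp_eq, dd_self, dd_comm hS h 1]
          ring
        rw [e]; linarith
    | succ k ih =>
        have h4 := gp_hyp hδ (h ^ (k+1)) (h ^ (k+2)) (h ^ k) 1
        rw [hBval k] at h4
        have e1 : gp S (h ^ (k+1)) (h ^ (k+2)) 1 = gp S (h ^ (k+1)) 1 (h ^ (k+2)) :=
          gp_comm hS _ _ _
        have e2 : gp S (h ^ (k+1)) (h ^ k) 1 = gp S (h ^ (k+1)) 1 (h ^ k) :=
          gp_comm hS _ _ _
        rw [e1, e2, hBD k, dd_pow_succ hS] at h4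
        rcases le_total (gp S (h ^ (k+1)) 1 (h ^ (k+2))) (D - gp S (h ^ k) 1 (h ^ (k+1)))
          with hle | hle
        · rw [min_eq_left hle] at h4
          linarith
        · rw [min_eq_right hle] at h4
          linarith
  -- growth of |h^k|
  have hL : ∀ k : ℕ, (k : ℝ) * σ ≤ dd S 1 (h ^ k) := by
    intro k
    induction k with
    | zero => simp [dd_comm hS 1 (h^0), dd_self, pow_zero]
    | succ k ih =>
        have e := dd_one_pow hS h k
        have := hB k
        push_cast
        rw [e]
        rw [hσ]
        nlinarith [hB k, ih]
  have hLstep : ∀ k : ℕ, dd S 1 (h ^ k) + σ ≤ dd S 1 (h ^ (k+1)) := by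
    intro k
    have e := dd_one_pow hS h k
    have := hB k
    rw [e, hσ]
    linarith
  -- γ_j = (h^j | h)_e is large
  have hγ : ∀ j : ℕ, 1 ≤ j → (σ + D) / 2 ≤ gp S 1 (h ^ j) h := by
    intro j hj
    obtain ⟨i, rfl⟩ : ∃ i, j = i + 1 := ⟨j - 1, by omega⟩
    have e : gp S 1 (h ^ (i+1)) h
        = (dd S (h ^ (i+1)) 1 + dd S h 1 - dd S (h ^ (i+1)) h) / 2 := gp_eq _ _ _
    have e2 : dd S (h ^ (i+1)) h = dd S 1 (h ^ i) := by
      rw [dd_def, dd_def]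
      have a1 : (h ^ (i+1))⁻¹ * h = (h ^ i)⁻¹ := by
        rw [pow_succ]; group
      have a2 : (1 : Γ)⁻¹ * h ^ i = h ^ i := by group
      rw [a1, a2, wl_inv hS]
    have e3 : dd S (h ^ (i+1)) 1 = dd S 1 (h ^ (i+1)) := dd_comm hS _ _
    rw [e, e2, e3]
    have := hLstep i
    linarith
  -- (e | h^m)_{h^k} is small for m > k ≥ 1
  have hE : ∀ k m : ℕ, 1 ≤ k → k < m → gp S (h ^ k) 1 (h ^ m) ≤ c + 2 * δ := by
    intro k m hk hkm
    have h4 := gp_hyp hδ (h ^ k) 1 (h ^ (k+1)) (h ^ m)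
    rw [gp_comm hS (h ^ k) (h ^ (k+1)) (h ^ m)] at h4
    have etr : gp S (h ^ k) (h ^ m) (h ^ (k+1)) = gp S 1 (h ^ (m - k)) h := by
      have e := gp_translate (S := S) (h ^ k) 1 (h ^ (m - k)) h
      have e1 : h ^ k * 1 = h ^ k := mul_one _
      have e2 : h ^ k * h ^ (m - k) = h ^ m := by
        rw [← pow_add]
        congr 1
        omega
      have e3 : h ^ k * h = h ^ (k+1) := by rw [← pow_succ]
      rw [e1, e2, e3] at e
      rw [e]
    have hγ' : (σ + D) / 2 ≤ gp S (h ^ k) (h ^ m) (h ^ (k+1)) := by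
      rw [etr]
      exact hγ (m - k) (by omega)
    have hBk := hB k
    have hbig : c + 2 * δ < (σ + D) / 2 := by
      rw [hσ]
      linarith
    rcases le_total (gp S (h ^ k) 1 (h ^ m)) (gp S (h ^ k) (h ^ m) (h ^ (k+1)))
      with hle | hle
    · rw [min_eq_left hle] at h4
      linarith
    · rw [min_eq_right hle] at h4
      linarith
  -- conclusion
  intro k m hk hkm
  rcases eq_or_lt_of_le hkm with rfl | hlt
  · have e : gp S 1 (h ^ k) (h ^ k) = dd S (h ^ k) 1 := by
      rw [gp_eq, dd_self]
      ring
    have := hL k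
    have e2 : dd S (h ^ k) 1 = dd S 1 (h ^ k) := dd_comm hS _ _
    rw [e, e2]
    linarith
  · have hadd := gp_add hS 1 (h ^ m) (h ^ k)
    have e1 : gp S 1 (h ^ m) (h ^ k) = gp S 1 (h ^ k) (h ^ m) := gp_comm hS _ _ _
    have e2 : gp S (h ^ k) (h ^ m) 1 = gp S (h ^ k) 1 (h ^ m) := gp_comm hS _ _ _
    rw [e1, e2] at hadd
    have hEk := hE k m hk hlt
    have := hL k
    have e3 : dd S 1 (h ^ k) = dd S 1 (h ^ k) := rfl
    -- gp S 1 (h^k) (h^m) = dd S 1 (h^k) - gp S (h^k) 1 (h^m)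
    linarith

end Chain
section MinConj

variable {S : Set Γ} {δ : ℝ}

lemma min_conj_prod_small (hS : IsGenSet S) (hδ : IsHyperbolic S δ) {h : Γ}
    (hmin : ∀ y : Γ, wl S h ≤ wl S (y⁻¹ * h * y))
    (hL : 4 * δ + 1 < (wl S h : ℝ)) :
    gp S 1 h h⁻¹ ≤ 2 * δ := by
  have hδ0 : 0 ≤ δ := hδ.1
  set L : ℕ := wl S h with hLdef
  set k : ℕ := L / 2 with hkdef
  obtain ⟨u, hu1, hu2⟩ := exists_prefix hS h k (Nat.div_le_self _ _)
  have hk2 : 2 * k ≤ L := by omega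
  have hk2' : L ≤ 2 * k + 1 := by omega
  have hkR : 2 * δ < (k : ℝ) := by
    have : (L : ℝ) ≤ 2 * (k : ℝ) + 1 := by exact_mod_cast hk2'
    linarith
  have hLkR : 2 * δ + 1/2 ≤ (L : ℝ) - (k : ℝ) := by
    have : 2 * (k : ℝ) ≤ (L : ℝ) := by exact_mod_cast hk2
    linarith
  -- distances
  have duh : dd S u h = (L : ℝ) - (k : ℝ) := by
    rw [dd_def, hu2]
    rw [Nat.cast_sub (Nat.div_le_self _ _)]
  have du1 : dd S u 1 = (k : ℝ) := by rw [dd_eq_wl hS, hu1]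
  have d1h : dd S 1 h = (L : ℝ) := by
    rw [dd_def]
    congr 1
    group
    rfl
  have dh1 : dd S h 1 = (L : ℝ) := by rw [dd_eq_wl hS]
  -- A1 : (u|e)_h = L - k
  have A1 : gp S h u 1 = (L : ℝ) - (k : ℝ) := by
    rw [gp_eq, duh, dd_comm hS 1 h, dh1, du1]
    ring
  -- A2 : (h²|hu)_h = k
  have A2 : gp S h (h * h) (h * u) = (k : ℝ) := by
    have e := gp_translate (S := S) h 1 h u
    rw [mul_one] at e
    rw [e, gp_eq, dh1, du1, dd_comm hS h u, duh]
    ring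
  -- A3 : (e|h²)_h = (h|h⁻¹)_e
  have A3 : gp S h 1 (h * h) = gp S 1 h h⁻¹ := by
    rw [gp_eq, gp_eq]
    have b1 : dd S 1 h = dd S h 1 := dd_comm hS _ _
    have b2 : dd S (h * h) h = dd S h 1 := by
      rw [dd_def, dd_def]
      congr 1
      group
    have b3 : dd S h⁻¹ 1 = dd S h 1 := by
      rw [dd_def, dd_def]
      have e1 : (h⁻¹)⁻¹ * 1 = (h⁻¹ * 1)⁻¹ := by group
      rw [e1, wl_inv hS]
    have b4 : dd S h h⁻¹ = dd S 1 (h * h) := by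
      rw [dd_def, dd_def]
      have e1 : h⁻¹ * h⁻¹ = ((1:Γ)⁻¹ * (h * h))⁻¹ := by group
      rw [e1, wl_inv hS]
    rw [b1, b2, b3, b4]
  -- minimality : L ≤ d(u, hu)
  have A4 : (L : ℝ) ≤ dd S u (h * u) := by
    rw [dd_def]
    have e1 : u⁻¹ * (h * u) = u⁻¹ * h * u := by group
    rw [e1]
    exact_mod_cast hmin u
  -- expansion : d(u,hu) = d(u,h) + d(h,hu) - 2 (u|hu)_h
  have A5 : dd S u (h * u) = dd S u h + dd S h (h * u) - 2 * gp S h u (h * u) := by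
    have e := gp_eq (S := S) h u (h * u)
    have c1 : dd S (h * u) h = dd S h (h * u) := dd_comm hS _ _
    linarith [e, c1]
  have dhhu : dd S h (h * u) = (k : ℝ) := by
    have e := dd_left (S := S) h 1 u
    rw [mul_one] at e
    rw [e, dd_comm hS 1 u, du1]
  -- 4-point inequalities
  have A6 := gp_hyp hδ h u (h * u) 1
  rw [gp_comm hS h (h * u) 1] at A6
  have A7 := gp_hyp hδ h 1 (h * u) (h * h)
  rw [gp_comm hS h (h * u) (h * h)] at A7
  -- conclude
  have hP : gp S h 1 (h * u) ≤ δ := by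
    have hle : gp S h u (h * u) ≤ 0 := by
      have := A4
      rw [A5, duh, dhhu] at this
      linarith
    rcases le_total (gp S h u 1) (gp S h 1 (h * u)) with hc | hc
    · rw [min_eq_left hc] at A6
      rw [A1] at hc
      linarith
    · rw [min_eq_right hc] at A6
      linarith
  rcases le_total (gp S h 1 (h * h)) (gp S h (h * h) (h * u)) with hc | hc
  · rw [min_eq_left hc, A3] at A7
    linarith
  · rw [min_eq_right hc, A2] at A7
    linarith

lemma exists_min_conjugate (hS : IsGenSet S) (b : Γ) :
    ∃ x : Γ, ∀ y : Γ, wl S (x⁻¹ * b * x) ≤ wl S (y⁻¹ * b * y) := by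
  classical
  have hne : (Set.range fun y : Γ => wl S (y⁻¹ * b * y)).Nonempty := ⟨_, 1, rfl⟩
  obtain ⟨x, hx⟩ := Nat.sInf_mem hne
  refine ⟨x, fun y => ?_⟩
  have hx' : wl S (x⁻¹ * b * x) = sInf (Set.range fun y : Γ => wl S (y⁻¹ * b * y)) := hx
  rw [hx']
  exact Nat.sInf_le ⟨y, rfl⟩

lemma wl_pow_le (hS : IsGenSet S) (a : Γ) (s : ℕ) : wl S (a ^ s) ≤ s * wl S a := by
  induction s with
  | zero => simp [wl_one]
  | succ s ih =>
      have := wl_mul_le (S := S) (a ^ s) a hS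
      rw [← pow_succ] at this
      calc wl S (a ^ (s+1)) ≤ wl S (a ^ s) + wl S a := this
        _ ≤ s * wl S a + wl S a := by omega
        _ = (s+1) * wl S a := by ring

end MinConj
section ConvPowers

variable {S : Set Γ} {δ : ℝ}

lemma conv_powers (hS : IsGenSet S) (hδ : IsHyperbolic S δ)
    {a : Γ} (ha : ¬ IsOfFinOrder a) :
    Tendsto (fun p : ℕ × ℕ => gp S 1 (a ^ p.1) (a ^ p.2)) atTop atTop := by
  classical
  have hδ0 : 0 ≤ δ := hδ.1
  set T : ℕ := Nat.ceil (4 * δ) + Nat.ceil (7 * δ) + 2 with hT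
  obtain ⟨N, hN1, hNbig⟩ := exists_undistorted_power hS hδ ha T
  obtain ⟨x₀, hminx⟩ := exists_min_conjugate hS (a ^ N)
  set h : Γ := x₀⁻¹ * (a ^ N) * x₀ with hh
  -- length of h exceeds T
  have hwlh : (T : ℝ) < (wl S h : ℝ) := by
    have := hNbig x₀
    have e : dd S x₀ (a ^ N * x₀) = (wl S h : ℝ) := by
      rw [dd_def, hh]
      congr 2
      group
    rw [e] at this
    exact this
  have hceil4 : (4 : ℝ) * δ ≤ (Nat.ceil (4*δ) : ℝ) := Nat.le_ceil _
  have hceil7 : (7 : ℝ) * δ ≤ (Nat.ceil (7*δ) : ℝ) := Nat.le_ceil _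
  have hTR : 4 * δ + 7 * δ + 2 ≤ (T : ℝ) := by
    rw [hT]
    push_cast
    linarith
  -- minimality in L3 form
  have hmin : ∀ y : Γ, wl S h ≤ wl S (y⁻¹ * h * y) := by
    intro y
    have e : y⁻¹ * h * y = (x₀ * y)⁻¹ * (a ^ N) * (x₀ * y) := by
      rw [hh]; group
    rw [e]
    have e2 : wl S h = wl S (x₀⁻¹ * (a ^ N) * x₀) := by rw [hh]
    rw [e2]
    exact hminx (x₀ * y)
  have hc : gp S 1 h h⁻¹ ≤ 2 * δ := by
    refine min_conj_prod_small hS hδ hmin ?_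
    linarith
  have hc0 : 0 ≤ gp S 1 h h⁻¹ := gp_nonneg hS _ _
  have hdh1 : dd S h 1 = (wl S h : ℝ) := dd_eq_wl hS h
  have hD : 2 * gp S 1 h h⁻¹ + 3 * δ < dd S h 1 := by
    rw [hdh1]; linarith
  have hσ1 : 1 ≤ dd S h 1 - 2 * gp S 1 h h⁻¹ - 2 * δ := by
    rw [hdh1]; linarith
  have chain := chain_main hS hδ hD
  -- transfer to powers of a
  have hconj : ∀ k : ℕ, a ^ (N * k) = x₀ * h ^ k * x₀⁻¹ := by
    intro k
    rw [hh]
    have : x₀ * (x₀⁻¹ * a ^ N * x₀) ^ k * x₀⁻¹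
        = (x₀ * (x₀⁻¹ * a ^ N * x₀) * x₀⁻¹) ^ k := by
      rw [conj_pow]
    rw [this]
    have e : x₀ * (x₀⁻¹ * a ^ N * x₀) * x₀⁻¹ = a ^ N := by group
    rw [e, ← pow_mul]
  have hx0 : dd S x₀⁻¹ 1 = (wl S x₀ : ℝ) := by
    rw [dd_def]
    have e : (x₀⁻¹)⁻¹ * 1 = (x₀⁻¹ * 1)⁻¹ := by group
    rw [e, wl_inv hS, mul_one, wl_inv hS]
  have trans : ∀ k m : ℕ,
      gp S 1 (h ^ k) (h ^ m) - 3 * (wl S x₀ : ℝ) ≤ gp S 1 (a ^ (N*k)) (a ^ (N*m)) := by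
    intro k m
    rw [hconj k, hconj m]
    have step1 : gp S 1 (x₀ * h ^ k * x₀⁻¹) (x₀ * h ^ m * x₀⁻¹)
        = gp S x₀⁻¹ (h ^ k * x₀⁻¹) (h ^ m * x₀⁻¹) := by
      have e := gp_translate (S := S) x₀ x₀⁻¹ (h ^ k * x₀⁻¹) (h ^ m * x₀⁻¹)
      rw [mul_inv_cancel] at e
      rw [← e]
      congr 1 <;> group
    rw [step1]
    have step2 := gp_base (S := S) x₀⁻¹ (h ^ k * x₀⁻¹) (h ^ m * x₀⁻¹)
    have b1 : gp S 1 (h ^ k * x₀⁻¹) x₀⁻¹ ≤ dd S x₀⁻¹ 1 := gp_le_right hS _ _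
    have b2 : gp S 1 (h ^ m * x₀⁻¹) x₀⁻¹ ≤ dd S x₀⁻¹ 1 := gp_le_right hS _ _
    have step3 : gp S 1 (h ^ k) (h ^ m) - dd S (h ^ k * x₀⁻¹) (h ^ k) - dd S (h ^ m * x₀⁻¹) (h ^ m)
        ≤ gp S 1 (h ^ k * x₀⁻¹) (h ^ m * x₀⁻¹) := gp_perturb hS _ _ _ _
    have c1 : dd S (h ^ k * x₀⁻¹) (h ^ k) = (wl S x₀ : ℝ) := by
      have e := dd_left (S := S) (h ^ k) x₀⁻¹ 1
      rw [mul_one] at e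
      rw [e, hx0]
    have c2 : dd S (h ^ m * x₀⁻¹) (h ^ m) = (wl S x₀ : ℝ) := by
      have e := dd_left (S := S) (h ^ m) x₀⁻¹ 1
      rw [mul_one] at e
      rw [e, hx0]
    have hx0nn : (0:ℝ) ≤ (wl S x₀ : ℝ) := Nat.cast_nonneg _
    rw [c1, c2] at step3
    rw [hx0] at step2 b1 b2
    linarith
  -- powers of a at arbitrary exponents
  have hNa : ∀ i : ℕ, dd S (a ^ i) (a ^ (N * (i / N))) ≤ (N * wl S a : ℝ) := by
    intro i
    rw [dd_def]
    have e : (a ^ i)⁻¹ * a ^ (N * (i / N)) = (a ^ (i % N))⁻¹ := by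
      have : i = N * (i / N) + i % N := (Nat.div_add_mod i N).symm
      nth_rewrite 1 [this]
      rw [pow_add]
      group
    rw [e, wl_inv hS]
    have h1 : wl S (a ^ (i % N)) ≤ (i % N) * wl S a := wl_pow_le hS a _
    have h2 : (i % N) * wl S a ≤ N * wl S a := by
      have := Nat.mod_lt i (show 0 < N by omega)
      exact Nat.mul_le_mul_right _ (by omega)
    exact_mod_cast le_trans h1 h2
  -- final bound
  set E : ℝ := gp S 1 h h⁻¹ + 2 * δ + 3 * (wl S x₀ : ℝ) + 2 * (N * wl S a : ℝ) with hE
  have main : ∀ n : ℕ, ∀ i i' : ℕ, N * (n+1) ≤ i → N * (n+1) ≤ i' →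
      (n:ℝ) + 1 - E ≤ gp S 1 (a ^ i) (a ^ i') := by
    intro n i i' hi hi'
    set k : ℕ := i / N with hk
    set k' : ℕ := i' / N with hk'
    have hk1 : n + 1 ≤ k := by
      rw [hk]
      exact Nat.le_div_iff_mul_le (by omega) |>.2 (by rw [Nat.mul_comm]; exact hi)
    have hk1' : n + 1 ≤ k' := by
      rw [hk']
      exact Nat.le_div_iff_mul_le (by omega) |>.2 (by rw [Nat.mul_comm]; exact hi')
    have hch : (n:ℝ) + 1 - (gp S 1 h h⁻¹ + 2 * δ) ≤ gp S 1 (h ^ k) (h ^ k') := by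
      rcases le_total k k' with hkk | hkk
      · have := chain k k' (by omega) hkk
        have hkc : ((n:ℝ) + 1) ≤ (k:ℝ) := by exact_mod_cast hk1
        nlinarith [hσ1, Nat.cast_nonneg (α := ℝ) k]
      · have := chain k' k (by omega) hkk
        rw [gp_comm hS 1 (h ^ k') (h ^ k)] at this
        have hkc : ((n:ℝ) + 1) ≤ (k':ℝ) := by exact_mod_cast hk1'
        nlinarith [hσ1, Nat.cast_nonneg (α := ℝ) k']
    have htr := trans k k'
    have hp1 := gp_perturb hS (a ^ i) (a ^ i') (a ^ (N * k)) (a ^ (N * k'))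
    have hd1 := hNa i
    have hd2 := hNa i'
    have hcm1 : dd S (a ^ i) (a ^ (N * k)) = dd S (a ^ i) (a ^ (N * (i / N))) := by rw [hk]
    have hcm2 : dd S (a ^ i') (a ^ (N * k')) = dd S (a ^ i') (a ^ (N * (i' / N))) := by rw [hk']
    rw [← hcm1] at hd1
    rw [← hcm2] at hd2
    rw [hE]
    linarith
  -- conclude Tendsto
  rw [tendsto_atTop]
  intro b
  obtain ⟨n, hn⟩ := exists_nat_ge (b + E)
  rw [eventually_atTop]
  refine ⟨(N * (n+1), N * (n+1)), fun p hp => ?_⟩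
  have h1 : N * (n+1) ≤ p.1 := hp.1
  have h2 : N * (n+1) ≤ p.2 := hp.2
  have := main n p.1 p.2 h1 h2
  linarith

end ConvPowers
section ENNRealHelpers

lemma le_liminf_of_forall {α : Type*} {l : Filter α} {f : α → ℝ≥0∞} {a : ℝ≥0∞}
    (h : ∀ᶠ x in l, a ≤ f x) : a ≤ Filter.liminf f l := by
  rw [Filter.liminf_eq]
  exact le_sSup h

lemma add_liminf_le {α : Type*} {l : Filter α} (c : ℝ≥0∞) (f : α → ℝ≥0∞) :
    c + Filter.liminf f l ≤ Filter.liminf (fun x => c + f x) l := by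
  rw [Filter.liminf_eq]
  have hs : {a | ∀ᶠ n in l, a ≤ f n}.Nonempty := ⟨0, by simp⟩
  rw [ENNReal.add_sSup hs]
  refine iSup₂_le fun b hb => ?_
  refine le_liminf_of_forall ?_
  filter_upwards [hb] with x hx
  exact add_le_add_right hx c

lemma liminf_add_const_le {α : Type*} {l : Filter α} (c : ℝ≥0∞) (f : α → ℝ≥0∞) :
    Filter.liminf (fun x => f x + c) l ≤ Filter.liminf f l + c := by
  rw [Filter.liminf_eq (f := l) (u := fun x => f x + c)]
  refine sSup_le fun b hb => ?_
  rw [← tsub_le_iff_right]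
  refine le_liminf_of_forall ?_
  filter_upwards [hb] with x hx
  exact tsub_le_iff_right.2 hx

end ENNRealHelpers
section StepTwo

variable {S : Set Γ} {δ : ℝ}

lemma gp_smul (hS : IsGenSet S) (t x y : Γ) :
    gp S 1 (t * x) (t * y)
      = gp S 1 x y + dd S t⁻¹ 1 - gp S 1 x t⁻¹ - gp S 1 y t⁻¹ := by
  have e := gp_translate (S := S) t t⁻¹ x y
  rw [mul_inv_cancel] at e
  rw [e]
  exact gp_base t⁻¹ x y

lemma gp_smul_ge (hS : IsGenSet S) (t x y : Γ) :
    gp S 1 x y - dd S t⁻¹ 1 ≤ gp S 1 (t * x) (t * y) := by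
  rw [gp_smul hS t x y]
  have b1 : gp S 1 x t⁻¹ ≤ dd S t⁻¹ 1 := gp_le_right hS _ _
  have b2 : gp S 1 y t⁻¹ ≤ dd S t⁻¹ 1 := gp_le_right hS _ _
  linarith

lemma convinf_smul (hS : IsGenSet S) {u : ℕ → Γ} (hu : ConvInf S u) (t : Γ) :
    ConvInf S (fun i => t * u i) := by
  have h' := tendsto_atTop_add_const_right atTop (-(dd S t⁻¹ 1)) hu
  refine tendsto_atTop_mono (fun p => ?_) h'
  have := gp_smul_ge hS t (u p.1) (u p.2)
  simp only
  linarith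

lemma convinf_bound {u : ℕ → Γ} (hu : ConvInf S u) (M : ℝ) :
    ∃ I : ℕ, ∀ i j, I ≤ i → I ≤ j → M ≤ gp S 1 (u i) (u j) := by
  have h := (tendsto_atTop.1 hu) M
  rw [eventually_atTop] at h
  obtain ⟨p₀, hp⟩ := h
  refine ⟨max p₀.1 p₀.2, fun i j hi hj => ?_⟩
  exact hp (i, j) ⟨le_trans (le_max_left _ _) hi, le_trans (le_max_right _ _) hj⟩

lemma eventual_small_product (hS : IsGenSet S) (hδ : IsHyperbolic S δ)
    {a : Γ} {u : ℕ → Γ} (hu : ConvInf S u) {r : ℝ} (n₁ : ℕ)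
    (hbig : ∀ k k', n₁ ≤ k → n₁ ≤ k' → r + 2 + 2 * δ ≤ gp S 1 (a ^ k) (a ^ k'))
    (hfreq : ∀ I K : ℕ, ∃ i k, I ≤ i ∧ K ≤ k ∧ gp S 1 (u i) (a ^ k) < r + 1) :
    ∃ I : ℕ, ∀ n, n₁ ≤ n → ∀ i, I ≤ i → gp S 1 (u i) (a ^ n) ≤ r + 1 + 2 * δ := by
  have hδ0 : 0 ≤ δ := hδ.1
  obtain ⟨I₁, hI₁⟩ := convinf_bound hu (r + 2 + 2 * δ)
  refine ⟨I₁, fun n hn i' hi' => ?_⟩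
  obtain ⟨i, k, hiI, hkn, hsmall⟩ := hfreq I₁ n₁
  have hb : r + 2 + 2 * δ ≤ gp S 1 (a ^ k) (a ^ n) := hbig k n hkn hn
  -- first 4-point : (u i | a^n) < r + 1 + δ
  have h4 := gp_hyp hδ 1 (u i) (a ^ k) (a ^ n)
  have hstep1 : gp S 1 (u i) (a ^ n) < r + 1 + δ := by
    rcases le_total (gp S 1 (u i) (a ^ n)) (gp S 1 (a ^ k) (a ^ n)) with hcc | hcc
    · rw [min_eq_left hcc] at h4
      linarith
    · rw [min_eq_right hcc] at h4
      linarith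
  -- second 4-point : (u i' | a^n) ≤ r + 1 + 2δ
  have h5 := gp_hyp hδ 1 (u i) (a ^ n) (u i')
  have hAA : r + 2 + 2 * δ ≤ gp S 1 (u i) (u i') := hI₁ i i' hiI hi'
  rcases le_total (gp S 1 (u i) (u i')) (gp S 1 (a ^ n) (u i')) with hcc | hcc
  · rw [min_eq_left hcc] at h5
    linarith
  · rw [min_eq_right hcc] at h5
    rw [gp_comm hS 1 (u i') (a ^ n)]
    linarith

end StepTwo
theorem gromov_product_translation_estimate
    (Γ : Type) [Group Γ] (S : Set Γ) (δ : ℝ)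
    (hS : IsGenSet S) (hδ : IsHyperbolic S δ) (hne : Nonelementary Γ)
    (B : Boundary Γ S)
    (g : Γ) (hg : ¬ IsOfFinOrder g) (r : ℝ) (hr : 0 < r) :
    ∃ C : ℝ, ∀ ξ η : B.pt,
      bgp B ξ (minusPt B g) ≤ ENNReal.ofReal r →
      bgp B η (minusPt B g) ≤ ENNReal.ofReal r →
      ∀ n : ℕ,
        (wl S ((g ^ n)⁻¹) : ℝ≥0∞) + bgp B ξ η ≤
          bgp B (B.smul (g ^ n) ξ) (B.smul (g ^ n) η) + ENNReal.ofReal C := by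
  classical
  have hδ0 : 0 ≤ δ := hδ.1
  have hginv : ¬ IsOfFinOrder g⁻¹ := fun hf => hg (isOfFinOrder_inv_iff.1 hf)
  have CIm : ConvInf S (fun k : ℕ => g⁻¹ ^ k) := conv_powers hS hδ hginv
  set D : ℝ := r + 1 + 2 * δ with hDdef
  have hD0 : 0 ≤ D := by rw [hDdef]; linarith
  obtain ⟨n₂, hn₂⟩ := convinf_bound CIm (2 * D + (r + 2 + 2 * δ))
  have hbig : ∀ k k', n₂ ≤ k → n₂ ≤ k' →
      r + 2 + 2 * δ ≤ gp S 1 (g⁻¹ ^ k) (g⁻¹ ^ k') := by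
    intro k k' hk hk'
    have := hn₂ k k' hk hk'
    linarith
  have hLdiag : ∀ n, n₂ ≤ n → 2 * D ≤ (wl S ((g ^ n)⁻¹) : ℝ) := by
    intro n hn
    have h1 := hn₂ n n hn hn
    have e : gp S 1 (g⁻¹ ^ n) (g⁻¹ ^ n) = dd S (g⁻¹ ^ n) 1 := by
      rw [gp_eq, dd_self]; ring
    rw [e, dd_eq_wl hS, inv_pow] at h1
    linarith
  set Lmax : ℕ := (Finset.range (n₂ + 1)).sup (fun m => wl S ((g ^ m)⁻¹)) with hLmaxdef
  refine ⟨2 * D + 2 * (Lmax : ℝ), ?_⟩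
  intro ξ η hξ hη n
  haveI hne1 : Nonempty {u : ℕ → Γ // ConvInf S u ∧ B.cls u = ξ} := by
    obtain ⟨u, hu, hc⟩ := B.cls_surj ξ; exact ⟨⟨u, hu, hc⟩⟩
  haveI hne2 : Nonempty {v : ℕ → Γ // ConvInf S v ∧ B.cls v = η} := by
    obtain ⟨v, hv, hc⟩ := B.cls_surj η; exact ⟨⟨v, hv, hc⟩⟩
  set LnR : ℝ := (wl S ((g ^ n)⁻¹) : ℝ) with hLnR
  have hLnR0 : 0 ≤ LnR := Nat.cast_nonneg _
  have hddw : dd S (g ^ n)⁻¹ 1 = LnR := dd_eq_wl hS _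
  have key : ∀ x y : Γ, gp S 1 (g ^ n * x) (g ^ n * y)
      = gp S 1 x y + LnR - gp S 1 x (g ^ n)⁻¹ - gp S 1 y (g ^ n)⁻¹ := by
    intro x y
    rw [gp_smul hS (g ^ n) x y, hddw]
  have keyw : ∀ x : Γ, gp S 1 x ((g ^ n)⁻¹) ≤ LnR := by
    intro x
    rw [← hddw]
    exact gp_le_right hS _ _
  have main2 : ∀ (uu : {u : ℕ → Γ // ConvInf S u ∧ B.cls u = ξ})
      (vv : {v : ℕ → Γ // ConvInf S v ∧ B.cls v = η}),
      (wl S ((g ^ n)⁻¹) : ℝ≥0∞) +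
        Filter.liminf (fun p : ℕ × ℕ => ENNReal.ofReal (gp S 1 (uu.1 p.1) (vv.1 p.2))) atTop ≤
        bgp B (B.smul (g ^ n) ξ) (B.smul (g ^ n) η)
          + ENNReal.ofReal (2 * D + 2 * (Lmax : ℝ)) := by
    rintro ⟨u, hu, hcu⟩ ⟨v, hv, hcv⟩
    simp only
    -- the translated representatives
    have huT : ConvInf S (fun i => g ^ n * u i) := convinf_smul hS hu (g ^ n)
    have hvT : ConvInf S (fun j => g ^ n * v j) := convinf_smul hS hv (g ^ n)
    have hcuT : B.cls (fun i => g ^ n * u i) = B.smul (g ^ n) ξ := by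
      rw [← hcu]; exact (B.smul_cls (g ^ n) u hu).symm
    have hcvT : B.cls (fun j => g ^ n * v j) = B.smul (g ^ n) η := by
      rw [← hcv]; exact (B.smul_cls (g ^ n) v hv).symm
    have hT : Filter.liminf
        (fun p : ℕ × ℕ => ENNReal.ofReal (gp S 1 (g ^ n * u p.1) (g ^ n * v p.2))) atTop
        ≤ bgp B (B.smul (g ^ n) ξ) (B.smul (g ^ n) η) :=
      le_iSup₂ (f := fun (u' : {u' : ℕ → Γ // ConvInf S u' ∧ B.cls u' = B.smul (g ^ n) ξ})
          (v' : {v' : ℕ → Γ // ConvInf S v' ∧ B.cls v' = B.smul (g ^ n) η}) =>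
          Filter.liminf (fun p : ℕ × ℕ => ENNReal.ofReal (gp S 1 (u'.1 p.1) (v'.1 p.2))) atTop)
        ⟨fun i => g ^ n * u i, huT, hcuT⟩ ⟨fun j => g ^ n * v j, hvT, hcvT⟩
    have hwlcast : (wl S ((g ^ n)⁻¹) : ℝ≥0∞) = ENNReal.ofReal LnR := by
      rw [hLnR, ENNReal.ofReal_natCast]
    by_cases hcase : n₂ ≤ n
    · -- main case
      have hfrequ : ∀ I K : ℕ, ∃ i k, I ≤ i ∧ K ≤ k ∧ gp S 1 (u i) (g⁻¹ ^ k) < r + 1 := by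
        by_contra hcon
        push_neg at hcon
        obtain ⟨I, K, hIK⟩ := hcon
        have hev : ∀ᶠ p : ℕ × ℕ in atTop,
            ENNReal.ofReal (r + 1) ≤ ENNReal.ofReal (gp S 1 (u p.1) (g⁻¹ ^ p.2)) := by
          rw [eventually_atTop]
          exact ⟨(I, K), fun p hp => ENNReal.ofReal_le_ofReal (hIK p.1 p.2 hp.1 hp.2)⟩
        have hlim := le_liminf_of_forall hev
        have hle : Filter.liminf
            (fun p : ℕ × ℕ => ENNReal.ofReal (gp S 1 (u p.1) (g⁻¹ ^ p.2))) atTop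
            ≤ ENNReal.ofReal r := by
          refine le_trans ?_ hξ
          exact le_iSup₂ (f := fun (u' : {u' : ℕ → Γ // ConvInf S u' ∧ B.cls u' = ξ})
              (v' : {v' : ℕ → Γ // ConvInf S v' ∧ B.cls v' = minusPt B g}) =>
              Filter.liminf (fun p : ℕ × ℕ => ENNReal.ofReal (gp S 1 (u'.1 p.1) (v'.1 p.2))) atTop)
            ⟨u, hu, hcu⟩ ⟨fun k => g⁻¹ ^ k, CIm, rfl⟩
        have h2 : ENNReal.ofReal (r + 1) ≤ ENNReal.ofReal r := le_trans hlim hle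
        have h3 := (ENNReal.ofReal_le_ofReal_iff (by linarith)).1 h2
        linarith
      have hfreqv : ∀ I K : ℕ, ∃ i k, I ≤ i ∧ K ≤ k ∧ gp S 1 (v i) (g⁻¹ ^ k) < r + 1 := by
        by_contra hcon
        push_neg at hcon
        obtain ⟨I, K, hIK⟩ := hcon
        have hev : ∀ᶠ p : ℕ × ℕ in atTop,
            ENNReal.ofReal (r + 1) ≤ ENNReal.ofReal (gp S 1 (v p.1) (g⁻¹ ^ p.2)) := by
          rw [eventually_atTop]
          exact ⟨(I, K), fun p hp => ENNReal.ofReal_le_ofReal (hIK p.1 p.2 hp.1 hp.2)⟩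
        have hlim := le_liminf_of_forall hev
        have hle : Filter.liminf
            (fun p : ℕ × ℕ => ENNReal.ofReal (gp S 1 (v p.1) (g⁻¹ ^ p.2))) atTop
            ≤ ENNReal.ofReal r := by
          refine le_trans ?_ hη
          exact le_iSup₂ (f := fun (u' : {u' : ℕ → Γ // ConvInf S u' ∧ B.cls u' = η})
              (v' : {v' : ℕ → Γ // ConvInf S v' ∧ B.cls v' = minusPt B g}) =>
              Filter.liminf (fun p : ℕ × ℕ => ENNReal.ofReal (gp S 1 (u'.1 p.1) (v'.1 p.2))) atTop)
            ⟨v, hv, hcv⟩ ⟨fun k => g⁻¹ ^ k, CIm, rfl⟩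
        have h2 : ENNReal.ofReal (r + 1) ≤ ENNReal.ofReal r := le_trans hlim hle
        have h3 := (ENNReal.ofReal_le_ofReal_iff (by linarith)).1 h2
        linarith
      obtain ⟨Iu, hIu⟩ := eventual_small_product hS hδ hu n₂ hbig hfrequ
      obtain ⟨Iv, hIv⟩ := eventual_small_product hS hδ hv n₂ hbig hfreqv
      have hLn2D : 0 ≤ LnR - 2 * D := by
        have := hLdiag n hcase
        rw [← hLnR] at this
        linarith
      have hev2 : ∀ᶠ p : ℕ × ℕ in atTop,
          ENNReal.ofReal (LnR - 2 * D) + ENNReal.ofReal (gp S 1 (u p.1) (v p.2))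
            ≤ ENNReal.ofReal (gp S 1 (g ^ n * u p.1) (g ^ n * v p.2)) := by
        rw [eventually_atTop]
        refine ⟨(Iu, Iv), fun p hp => ?_⟩
        have h1 := hIu n hcase p.1 hp.1
        have h2 := hIv n hcase p.2 hp.2
        rw [inv_pow] at h1 h2
        have hreal : (LnR - 2 * D) + gp S 1 (u p.1) (v p.2)
            ≤ gp S 1 (g ^ n * u p.1) (g ^ n * v p.2) := by
          have hk := key (u p.1) (v p.2)
          linarith [hk, h1, h2, hDdef]
        calc ENNReal.ofReal (LnR - 2 * D) + ENNReal.ofReal (gp S 1 (u p.1) (v p.2))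
            = ENNReal.ofReal ((LnR - 2 * D) + gp S 1 (u p.1) (v p.2)) :=
              (ENNReal.ofReal_add hLn2D (gp_nonneg hS _ _)).symm
          _ ≤ _ := ENNReal.ofReal_le_ofReal hreal
      have hlim2 : ENNReal.ofReal (LnR - 2 * D) +
          Filter.liminf (fun p : ℕ × ℕ => ENNReal.ofReal (gp S 1 (u p.1) (v p.2))) atTop
          ≤ Filter.liminf
            (fun p : ℕ × ℕ => ENNReal.ofReal (gp S 1 (g ^ n * u p.1) (g ^ n * v p.2))) atTop := by
        refine le_trans (add_liminf_le _ _) ?_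
        exact Filter.liminf_le_liminf hev2
      have hsplit : (wl S ((g ^ n)⁻¹) : ℝ≥0∞)
          = ENNReal.ofReal (LnR - 2 * D) + ENNReal.ofReal (2 * D) := by
        rw [hwlcast, ← ENNReal.ofReal_add hLn2D (by linarith)]
        congr 1
        ring
      have hC2D : ENNReal.ofReal (2 * D) ≤ ENNReal.ofReal (2 * D + 2 * (Lmax : ℝ)) :=
        ENNReal.ofReal_le_ofReal
          (by have := Nat.cast_nonneg (α := ℝ) Lmax; linarith)
      calc (wl S ((g ^ n)⁻¹) : ℝ≥0∞) +
            Filter.liminf (fun p : ℕ × ℕ => ENNReal.ofReal (gp S 1 (u p.1) (v p.2))) atTop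
          = (ENNReal.ofReal (LnR - 2 * D) +
              Filter.liminf (fun p : ℕ × ℕ => ENNReal.ofReal (gp S 1 (u p.1) (v p.2))) atTop)
              + ENNReal.ofReal (2 * D) := by
            rw [hsplit]; ring
        _ ≤ bgp B (B.smul (g ^ n) ξ) (B.smul (g ^ n) η) + ENNReal.ofReal (2 * D) := by
            exact add_le_add_left (le_trans hlim2 hT) _
        _ ≤ _ := add_le_add_right hC2D _
    · -- small n case
      have hnlt : n < n₂ + 1 := by omega
      have hLLe : LnR ≤ (Lmax : ℝ) := by
        rw [hLnR]
        exact_mod_cast Finset.le_sup (f := fun m => wl S ((g ^ m)⁻¹))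
          (Finset.mem_range.2 hnlt)
      have hev3 : ∀ᶠ p : ℕ × ℕ in atTop,
          ENNReal.ofReal (gp S 1 (u p.1) (v p.2))
            ≤ ENNReal.ofReal (gp S 1 (g ^ n * u p.1) (g ^ n * v p.2)) + ENNReal.ofReal LnR := by
        refine Filter.Eventually.of_forall fun p => ?_
        have hreal : gp S 1 (u p.1) (v p.2)
            ≤ gp S 1 (g ^ n * u p.1) (g ^ n * v p.2) + LnR := by
          have hk := key (u p.1) (v p.2)
          have b1 := keyw (u p.1)
          have b2 := keyw (v p.2)
          have b0 := gp_nonneg hS (u p.1) (v p.2)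
          linarith
        calc ENNReal.ofReal (gp S 1 (u p.1) (v p.2))
            ≤ ENNReal.ofReal (gp S 1 (g ^ n * u p.1) (g ^ n * v p.2) + LnR) :=
              ENNReal.ofReal_le_ofReal hreal
          _ = _ := ENNReal.ofReal_add (gp_nonneg hS _ _) hLnR0
      have hlim3 : Filter.liminf (fun p : ℕ × ℕ => ENNReal.ofReal (gp S 1 (u p.1) (v p.2))) atTop
          ≤ bgp B (B.smul (g ^ n) ξ) (B.smul (g ^ n) η) + ENNReal.ofReal LnR := by
        refine le_trans (Filter.liminf_le_liminf hev3) ?_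
        refine le_trans (liminf_add_const_le _ _) ?_
        exact add_le_add_left hT _
      have hfin : ENNReal.ofReal LnR + ENNReal.ofReal LnR
          ≤ ENNReal.ofReal (2 * D + 2 * (Lmax : ℝ)) := by
        rw [← ENNReal.ofReal_add hLnR0 hLnR0]
        refine ENNReal.ofReal_le_ofReal ?_
        linarith
      calc (wl S ((g ^ n)⁻¹) : ℝ≥0∞) +
            Filter.liminf (fun p : ℕ × ℕ => ENNReal.ofReal (gp S 1 (u p.1) (v p.2))) atTop
          ≤ ENNReal.ofReal LnR +
            (bgp B (B.smul (g ^ n) ξ) (B.smul (g ^ n) η) + ENNReal.ofReal LnR) := by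
            rw [hwlcast]
            exact add_le_add_right hlim3 _
        _ = bgp B (B.smul (g ^ n) ξ) (B.smul (g ^ n) η)
              + (ENNReal.ofReal LnR + ENNReal.ofReal LnR) := by ring
        _ ≤ _ := add_le_add_right hfin _
  -- assemble over all representatives
  have hbgp : (wl S ((g ^ n)⁻¹) : ℝ≥0∞) + bgp B ξ η
      = ⨆ (uu : {u : ℕ → Γ // ConvInf S u ∧ B.cls u = ξ})
          (vv : {v : ℕ → Γ // ConvInf S v ∧ B.cls v = η}),
          ((wl S ((g ^ n)⁻¹) : ℝ≥0∞) +
            Filter.liminf (fun p : ℕ × ℕ => ENNReal.ofReal (gp S 1 (uu.1 p.1) (vv.1 p.2))) atTop) := by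
    rw [bgp, ENNReal.add_iSup]
    exact iSup_congr fun uu => ENNReal.add_iSup _
  rw [hbgp]
  exact iSup_le fun uu => iSup_le fun vv => main2 uu vv
end HarmonicBoundary
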